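/- For all real numbers s and t with t > 0 and s > 1 + t, one has ∑_{n : T(s,t)·ln n < S(s,t)·ln R(n)} (R(n)^t / n^s) · (S(s,t) · ln R(n) − T(s,t) · ln n) = ∑_{n : T(s,t)·ln n > S(s,t)·ln R(n)} (R(n)^t / n^s) · (T(s,t) · ln n − S(s,t) · ln R(n)), both series converging. -/

import Mathlib

/-!
Write `w(n) = R(n)^t / n^s`; the claim is that `∑ w(n) (S ln R(n) − T ln n) = 0`, split
according to the sign of the summand. Since `w` is multiplicative, under the measure on `ℕ+`
proportional to `w` the valuation `v_p` is independent of the `p`-free part and has law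
proportional to the geometric sequence `w(p^k)`. Its mean is `p^s/(p^s−1) · p^t/(p^s−1+p^t)` and
`P(v_p ≥ 1) = p^t/(p^s−1+p^t)`. Summing `ln n = ∑_p v_p(n) ln p` and `ln R(n) = ∑_{p ∣ n} ln p`
over the primes (all terms are nonnegative, so the double sums may be swapped) gives
`∑ w ln n = S ∑ w` and `∑ w ln R = T ∑ w`.
-/

open scoped BigOperators

/-- The radical of a natural number: the product of its distinct prime factors. -/
def rad (n : ℕ) : ℕ := ∏ p ∈ n.primeFactors, p

/-- `S s t = ∑_p (p^s/(p^s − 1)) · (p^t/(p^s − 1 + p^t)) · ln p` over all primes `p`. -/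
noncomputable def S (s t : ℝ) : ℝ :=
  ∑' p : Nat.Primes, (((p : ℕ) : ℝ) ^ s / (((p : ℕ) : ℝ) ^ s - 1)) *
    (((p : ℕ) : ℝ) ^ t / (((p : ℕ) : ℝ) ^ s - 1 + ((p : ℕ) : ℝ) ^ t)) *
    Real.log ((p : ℕ) : ℝ)

/-- `T s t = ∑_p (p^t/(p^s − 1 + p^t)) · ln p` over all primes `p`. -/
noncomputable def T (s t : ℝ) : ℝ :=
  ∑' p : Nat.Primes, (((p : ℕ) : ℝ) ^ t / (((p : ℕ) : ℝ) ^ s - 1 + ((p : ℕ) : ℝ) ^ t)) *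
    Real.log ((p : ℕ) : ℝ)

open Real

lemma rad_pos (n : ℕ) : 0 < rad n :=
  Finset.prod_pos fun _ hp => (Nat.prime_of_mem_primeFactors hp).pos

lemma rad_le_self {n : ℕ} (hn : n ≠ 0) : rad n ≤ n :=
  Nat.le_of_dvd (Nat.pos_of_ne_zero hn) (Nat.prod_primeFactors_dvd n)

lemma rad_mul_of_coprime {a b : ℕ} (hab : a.Coprime b) : rad (a * b) = rad a * rad b := by
  rw [rad, rad, rad, hab.primeFactors_mul, Finset.prod_union hab.disjoint_primeFactors]

lemma rad_prime_pow {p k : ℕ} (hp : p.Prime) (hk : k ≠ 0) : rad (p ^ k) = p := by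
  rw [rad, Nat.primeFactors_prime_pow hk hp, Finset.prod_singleton]

lemma log_rad_eq_sum_primeFactors (n : ℕ) : log (rad n) = ∑ p ∈ n.primeFactors, log p := by
  rw [rad, Nat.cast_prod, log_prod]
  exact fun p hp => Nat.cast_ne_zero.2 (Nat.prime_of_mem_primeFactors hp).ne_zero

lemma Real.summable_log_mul_rpow_natCast {r : ℝ} (hr : r < -1) :
    Summable fun n : ℕ => log n * (n : ℝ) ^ r := by
  set ε := (-1 - r) / 2
  have hε : 0 < ε := by simp only [ε]; linarith
  have hsum : Summable fun n : ℕ => ε⁻¹ * (n : ℝ) ^ (ε + r) :=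
    (summable_nat_rpow.2 (by simp only [ε]; linarith)).mul_left ε⁻¹
  refine hsum.of_nonneg_of_le (fun n => mul_nonneg (log_natCast_nonneg n) (by positivity))
    fun n => ?_
  calc log n * (n : ℝ) ^ r ≤ (n : ℝ) ^ ε / ε * (n : ℝ) ^ r := by
        gcongr
        exact log_le_rpow_div n.cast_nonneg hε
    _ = ε⁻¹ * (n : ℝ) ^ (ε + r) := by
        rw [rpow_add' n.cast_nonneg (by simp only [ε]; linarith)]
        ring

lemma hasSum_primes_comp_factorization_mul_log {a : ℕ → ℝ} (ha : a 0 = 0) (n : ℕ) :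
    HasSum (fun p : Nat.Primes => a (n.factorization p) * log p)
      (∑ p ∈ n.primeFactors, a (n.factorization p) * log p) := by
  have hzero : ∀ p ∉ n.primeFactors, a (n.factorization p) * log p = 0 := fun p hp => by
    rw [← Nat.support_factorization, Finsupp.notMem_support_iff] at hp
    rw [hp, ha, zero_mul]
  refine (Nat.Primes.coe_nat_injective.hasSum_iff fun p hp => hzero p fun hmem => ?_).2
    (hasSum_sum_of_ne_finset_zero hzero)
  exact hp ⟨⟨p, Nat.prime_of_mem_primeFactors hmem⟩, rfl⟩

lemma hasSum_primes_factorization_mul_log (n : ℕ) :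
    HasSum (fun p : Nat.Primes => (n.factorization p : ℝ) * log p) (log n) := by
  rw [log_nat_eq_sum_factorization, Finsupp.sum, Nat.support_factorization]
  exact hasSum_primes_comp_factorization_mul_log (a := fun k : ℕ => (k : ℝ)) Nat.cast_zero n

lemma hasSum_primes_ite_factorization_mul_log (n : ℕ) :
    HasSum (fun p : Nat.Primes => (if n.factorization p = 0 then 0 else 1) * log p)
      (log (rad n)) := by
  convert hasSum_primes_comp_factorization_mul_log
    (a := fun k : ℕ => if k = 0 then (0 : ℝ) else 1) rfl n using 1
  rw [log_rad_eq_sum_primeFactors]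
  refine Finset.sum_congr rfl fun p hp => ?_
  rw [← Nat.support_factorization, Finsupp.mem_support_iff] at hp
  rw [if_neg hp, one_mul]

theorem hasSum_tsum_comm_of_nonneg {β γ : Type*} {f : β → γ → ℝ} (hf : ∀ b c, 0 ≤ f b c)
    {L : γ → ℝ} (hL : ∀ c, HasSum (fun b => f b c) (L c)) (hLs : Summable L) :
    HasSum (fun b => ∑' c, f b c) (∑' c, L c) := by
  have hsum : Summable (Function.uncurry fun c b => f b c) :=
    (summable_prod_of_nonneg fun _ => hf _ _).2
      ⟨fun c => (hL c).summable, by simpa only [(hL _).tsum_eq] using hLs⟩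
  rw [← tsum_congr fun c => (hL c).tsum_eq, ← hsum.tsum_comm]
  exact hsum.prod_symm.prod.hasSum

theorem hasSum_mul_of_hasSum_primes {w : ℕ+ → ℝ} (hw : ∀ n, 0 ≤ w n) {a : ℕ → ℝ}
    (ha : ∀ k, 0 ≤ a k) {L : ℕ+ → ℝ}
    (hL : ∀ n : ℕ+, HasSum (fun p : Nat.Primes => a ((n : ℕ).factorization p) * log p) (L n))
    (hLs : Summable fun n => L n * w n) {r : Nat.Primes → ℝ} {c : ℝ} (hc : c ≠ 0)
    (hr : ∀ p : Nat.Primes, HasSum (fun n : ℕ+ => a ((n : ℕ).factorization p) * w n) (r p * c)) :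
    HasSum (fun n => L n * w n) ((∑' p : Nat.Primes, r p * log p) * c) := by
  have h := hasSum_tsum_comm_of_nonneg
    (f := fun (p : Nat.Primes) (n : ℕ+) => a ((n : ℕ).factorization p) * log p * w n)
    (fun p n => mul_nonneg (mul_nonneg (ha _) (log_natCast_nonneg p)) (hw n))
    (fun n => (hL n).mul_right (w n)) hLs
  have hrow : ∀ p : Nat.Primes,
      ∑' n : ℕ+, a ((n : ℕ).factorization p) * log p * w n = r p * log p * c := fun p => by
    simp only [mul_right_comm _ (log _), tsum_mul_right, (hr p).tsum_eq]
  simp only [hrow] at h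
  have hsum : HasSum (fun p : Nat.Primes => r p * log p) ((∑' n, L n * w n) / c) := by
    simpa only [mul_div_cancel_right₀ _ hc] using h.div_const c
  rw [hsum.tsum_eq, div_mul_cancel₀ _ hc]
  exact hLs.hasSum

theorem HasSum.tsum_subtype_lt_eq_tsum_subtype_gt {α : Type*} {w g h : α → ℝ}
    (hf : HasSum (fun x => w x * (g x - h x)) 0) :
    Summable (fun x : {x // h x < g x} => w x * (g x - h x)) ∧
    Summable (fun x : {x // h x > g x} => w x * (h x - g x)) ∧
    ∑' x : {x // h x < g x}, w x * (g x - h x) = ∑' x : {x // h x > g x}, w x * (h x - g x) := by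
  set f := fun x => w x * (g x - h x)
  have hA : Summable fun x : {x // h x < g x} => f x := hf.summable.subtype {x | h x < g x}
  have hB : Summable fun x : {x // h x > g x} => f x := hf.summable.subtype {x | h x > g x}
  have hneg : ∀ x, w x * (h x - g x) = -f x := fun x => by ring
  refine ⟨hA, hB.neg.congr fun x => (hneg x).symm, ?_⟩
  have hsupp : Function.support f ⊆ {x | h x < g x} ∪ {x | h x > g x} := fun x hx => by
    rcases lt_trichotomy (h x) (g x) with hlt | heq | hgt
    · exact Or.inl hlt
    · exact absurd (by simp [f, heq]) hx
    · exact Or.inr hgt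
  have hsplit := (tsum_subtype_eq_of_support_subset hsupp).trans hf.tsum_eq
  rw [Summable.tsum_union_disjoint (f := f) (s := {x | h x < g x}) (t := {x | h x > g x})
    (Set.disjoint_left.2 fun _ h1 h2 => lt_asymm (α := ℝ) h1 h2) hA hB] at hsplit
  simp only [hneg, tsum_neg]
  exact eq_neg_of_add_eq_zero_left hsplit

lemma Nat.Prime.factorization_pow_mul_of_not_dvd {p k m : ℕ} (hp : p.Prime) (hm : ¬p ∣ m) :
    (p ^ k * m).factorization p = k := by
  have hm0 : m ≠ 0 := by rintro rfl; exact hm (dvd_zero p)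
  rw [Nat.factorization_mul (pow_ne_zero k hp.ne_zero) hm0, Finsupp.add_apply,
    hp.factorization_pow, Finsupp.single_eq_same, Nat.factorization_eq_zero_of_not_dvd hm, add_zero]

def Nat.Prime.powMulEquiv {p : ℕ} (hp : p.Prime) : ℕ × {m : ℕ+ // ¬p ∣ m} ≃ ℕ+ where
  toFun x := ⟨p ^ x.1 * x.2, Nat.mul_pos (pow_pos hp.pos _) x.2.1.pos⟩
  invFun n := ((n : ℕ).factorization p,
    ⟨⟨ordCompl[p] n, Nat.ordCompl_pos p n.ne_zero⟩, Nat.not_dvd_ordCompl hp n.ne_zero⟩)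
  left_inv := by
    rintro ⟨k, m, hm⟩
    refine Prod.ext (hp.factorization_pow_mul_of_not_dvd hm) (Subtype.ext (PNat.eq ?_))
    simp only [PNat.mk_coe]
    rw [hp.factorization_pow_mul_of_not_dvd hm, Nat.mul_div_cancel_left _ (pow_pos hp.pos k)]
  right_inv n := PNat.eq (Nat.ordProj_mul_ordCompl_eq_self n p)

section Multiplicative

variable {w : ℕ → ℝ} (hw0 : ∀ n, 0 ≤ w n)
  (hmul : ∀ {a b : ℕ}, a.Coprime b → w (a * b) = w a * w b) (hw : Summable fun n : ℕ+ => w n)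
  {p : ℕ} (hp : p.Prime) {a : ℕ → ℝ} (ha : ∀ k, 0 ≤ a k)

include hw0 hmul hw hp ha

theorem hasSum_comp_factorization_mul {A : ℝ} (hA : HasSum (fun k => a k * w (p ^ k)) A) :
    HasSum (fun n : ℕ+ => a ((n : ℕ).factorization p) * w n)
      (A * ∑' m : {m : ℕ+ // ¬p ∣ m}, w m) := by
  have hG : Summable fun m : {m : ℕ+ // ¬p ∣ m} => w m := hw.subtype {m | ¬p ∣ m}
  have hprod := hA.mul hG.hasSum
    (hA.summable.mul_of_nonneg hG (fun k => mul_nonneg (ha k) (hw0 _)) fun m => hw0 _)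
  rw [← hp.powMulEquiv.hasSum_iff]
  refine hprod.congr_fun fun ⟨k, m, hm⟩ => ?_
  have hcop : (p ^ k).Coprime m := (hp.coprime_iff_not_dvd.2 hm).pow_left k
  change a ((p ^ k * m).factorization p) * w (p ^ k * m) = _
  rw [hp.factorization_pow_mul_of_not_dvd hm, hmul hcop, mul_assoc]

theorem hasSum_comp_factorization_mul_div (hw1 : w 1 = 1) {A E : ℝ}
    (hA : HasSum (fun k => a k * w (p ^ k)) A) (hE : HasSum (fun k => w (p ^ k)) E) :
    HasSum (fun n : ℕ+ => a ((n : ℕ).factorization p) * w n) (A / E * ∑' n : ℕ+, w n) := by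
  have hE1 : 1 ≤ E := by
    simpa [hw1] using le_hasSum hE 0 fun k _ => hw0 _
  have hF := hasSum_comp_factorization_mul hw0 hmul hw hp (a := fun _ => 1)
    (fun _ => zero_le_one) (by simpa using hE)
  simp only [one_mul] at hF
  convert hasSum_comp_factorization_mul hw0 hmul hw hp ha hA using 1
  rw [hF.tsum_eq]
  field_simp

end Multiplicative

noncomputable def radWeight (s t : ℝ) (n : ℕ) : ℝ := (rad n : ℝ) ^ t / (n : ℝ) ^ s

section radWeight

variable {s t : ℝ}

lemma radWeight_nonneg (n : ℕ) : 0 ≤ radWeight s t n := by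
  unfold radWeight; positivity

lemma radWeight_one : radWeight s t 1 = 1 := by
  simp [radWeight, rad]

lemma radWeight_mul_of_coprime {a b : ℕ} (hab : a.Coprime b) :
    radWeight s t (a * b) = radWeight s t a * radWeight s t b := by
  simp only [radWeight, rad_mul_of_coprime hab, Nat.cast_mul]
  rw [mul_rpow (by positivity) (by positivity), mul_rpow (by positivity) (by positivity),
    mul_div_mul_comm]

lemma radWeight_prime_pow {p k : ℕ} (hp : p.Prime) (hk : k ≠ 0) :
    radWeight s t (p ^ k) = (p : ℝ) ^ t * ((p : ℝ) ^ s)⁻¹ ^ k := by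
  rw [radWeight, rad_prime_pow hp hk, Nat.cast_pow, ← rpow_pow_comm p.cast_nonneg, inv_pow,
    div_eq_mul_inv]

lemma radWeight_le_rpow (ht : 0 ≤ t) {n : ℕ} (hn : n ≠ 0) :
    radWeight s t n ≤ (n : ℝ) ^ (t - s) := by
  have hn' : (0 : ℝ) < n := by positivity
  rw [radWeight, rpow_sub hn']
  gcongr
  exact_mod_cast rad_le_self hn

lemma summable_radWeight (ht : 0 ≤ t) (hs : 1 + t < s) :
    Summable fun n : ℕ+ => radWeight s t n :=
  ((summable_nat_rpow.2 (by linarith : t - s < -1)).comp_injective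
    PNat.coe_injective).of_nonneg_of_le (fun n => radWeight_nonneg n)
    fun n => radWeight_le_rpow ht n.ne_zero

lemma summable_log_mul_radWeight (ht : 0 ≤ t) (hs : 1 + t < s) :
    Summable fun n : ℕ+ => log n * radWeight s t n :=
  ((summable_log_mul_rpow_natCast (by linarith : t - s < -1)).comp_injective
    PNat.coe_injective).of_nonneg_of_le
    (fun n => mul_nonneg (log_natCast_nonneg n) (radWeight_nonneg n))
    fun n => mul_le_mul_of_nonneg_left (radWeight_le_rpow ht n.ne_zero) (log_natCast_nonneg n)

lemma summable_log_rad_mul_radWeight (ht : 0 ≤ t) (hs : 1 + t < s) :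
    Summable fun n : ℕ+ => log (rad n) * radWeight s t n :=
  (summable_log_mul_radWeight ht hs).of_nonneg_of_le
    (fun n => mul_nonneg (log_natCast_nonneg _) (radWeight_nonneg n)) fun n =>
      mul_le_mul_of_nonneg_right (log_le_log (mod_cast rad_pos n) (mod_cast rad_le_self n.ne_zero))
        (radWeight_nonneg n)

end radWeight

section PrimePowers

variable {s t : ℝ} {p : ℕ} (hp : p.Prime) (hq : 1 < (p : ℝ) ^ s)
include hp hq

lemma hasSum_radWeight_prime_pow_succ :
    HasSum (fun k : ℕ => radWeight s t (p ^ (k + 1))) ((p : ℝ) ^ t / ((p : ℝ) ^ s - 1)) := by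
  have hgeom := (hasSum_geometric_of_lt_one (inv_nonneg.2 (zero_le_one.trans hq.le))
    (inv_lt_one_of_one_lt₀ hq)).mul_left ((p : ℝ) ^ t * ((p : ℝ) ^ s)⁻¹)
  have hval : (p : ℝ) ^ t / ((p : ℝ) ^ s - 1)
      = (p : ℝ) ^ t * ((p : ℝ) ^ s)⁻¹ * (1 - ((p : ℝ) ^ s)⁻¹)⁻¹ := by
    have : (p : ℝ) ^ s - 1 ≠ 0 := by linarith
    field_simp
  rw [hval]
  refine hgeom.congr_fun fun k => ?_
  rw [radWeight_prime_pow hp k.succ_ne_zero, pow_succ]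
  ring

lemma hasSum_radWeight_prime_pow :
    HasSum (fun k : ℕ => radWeight s t (p ^ k)) (1 + (p : ℝ) ^ t / ((p : ℝ) ^ s - 1)) := by
  simpa [radWeight_one] using
    (hasSum_radWeight_prime_pow_succ hp hq).zero_add (f := fun k => radWeight s t (p ^ k))

lemma hasSum_ite_mul_radWeight_prime_pow :
    HasSum (fun k : ℕ => (if k = 0 then 0 else 1) * radWeight s t (p ^ k))
      ((p : ℝ) ^ t / ((p : ℝ) ^ s - 1)) := by
  have hsucc : HasSum (fun k : ℕ => (if k + 1 = 0 then 0 else 1) * radWeight s t (p ^ (k + 1)))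
      ((p : ℝ) ^ t / ((p : ℝ) ^ s - 1)) :=
    (hasSum_radWeight_prime_pow_succ hp hq).congr_fun fun k => by simp
  simpa using
    hsucc.zero_add (f := fun k : ℕ => (if k = 0 then 0 else 1) * radWeight s t (p ^ k))

lemma hasSum_mul_radWeight_prime_pow :
    HasSum (fun k : ℕ => (k : ℝ) * radWeight s t (p ^ k))
      ((p : ℝ) ^ t * (p : ℝ) ^ s / ((p : ℝ) ^ s - 1) ^ 2) := by
  have hx : ‖((p : ℝ) ^ s)⁻¹‖ < 1 := by
    rw [norm_inv, Real.norm_of_nonneg (zero_le_one.trans hq.le)]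
    exact inv_lt_one_of_one_lt₀ hq
  have hval : (p : ℝ) ^ t * (p : ℝ) ^ s / ((p : ℝ) ^ s - 1) ^ 2
      = (p : ℝ) ^ t * (((p : ℝ) ^ s)⁻¹ / (1 - ((p : ℝ) ^ s)⁻¹) ^ 2) := by
    have : (p : ℝ) ^ s - 1 ≠ 0 := by linarith
    field_simp
  rw [hval]
  refine ((hasSum_coe_mul_geometric_of_norm_lt_one hx).mul_left _).congr_fun fun k => ?_
  rcases eq_or_ne k 0 with rfl | hk
  · simp
  · rw [radWeight_prime_pow hp hk]
    ring

end PrimePowers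

section PrimeFactors

variable {s t : ℝ} (ht : 0 ≤ t) (hs : 1 + t < s) {p : ℕ} (hp : p.Prime)
include ht hs hp

lemma hasSum_factorization_mul_radWeight :
    HasSum (fun n : ℕ+ => ((n : ℕ).factorization p : ℝ) * radWeight s t n)
      ((p : ℝ) ^ s / ((p : ℝ) ^ s - 1) * ((p : ℝ) ^ t / ((p : ℝ) ^ s - 1 + (p : ℝ) ^ t)) *
        ∑' n : ℕ+, radWeight s t n) := by
  have hq : 1 < (p : ℝ) ^ s := one_lt_rpow (mod_cast hp.one_lt) (by linarith)
  have h := hasSum_comp_factorization_mul_div radWeight_nonneg radWeight_mul_of_coprime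
    (summable_radWeight ht hs) hp (a := fun k : ℕ => (k : ℝ)) (fun k => k.cast_nonneg)
    radWeight_one (hasSum_mul_radWeight_prime_pow hp hq) (hasSum_radWeight_prime_pow hp hq)
  convert h using 2
  have : 0 < (p : ℝ) ^ t := rpow_pos_of_pos (mod_cast hp.pos) t
  have : (p : ℝ) ^ s - 1 ≠ 0 := by linarith
  field_simp

lemma hasSum_ite_factorization_mul_radWeight :
    HasSum (fun n : ℕ+ => (if (n : ℕ).factorization p = 0 then 0 else 1) * radWeight s t n)
      ((p : ℝ) ^ t / ((p : ℝ) ^ s - 1 + (p : ℝ) ^ t) * ∑' n : ℕ+, radWeight s t n) := by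
  have hq : 1 < (p : ℝ) ^ s := one_lt_rpow (mod_cast hp.one_lt) (by linarith)
  have h := hasSum_comp_factorization_mul_div radWeight_nonneg radWeight_mul_of_coprime
    (summable_radWeight ht hs) hp (a := fun k : ℕ => if k = 0 then (0 : ℝ) else 1)
    (fun k => by positivity) radWeight_one
    (hasSum_ite_mul_radWeight_prime_pow hp hq) (hasSum_radWeight_prime_pow hp hq)
  convert h using 2
  have : 0 < (p : ℝ) ^ t := rpow_pos_of_pos (mod_cast hp.pos) t
  have : (p : ℝ) ^ s - 1 ≠ 0 := by linarith
  field_simp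

end PrimeFactors

section Identities

variable {s t : ℝ} (ht : 0 ≤ t) (hs : 1 + t < s)
include ht hs

lemma one_le_tsum_radWeight : 1 ≤ ∑' n : ℕ+, radWeight s t n := by
  simpa [radWeight_one] using
    le_hasSum (summable_radWeight ht hs).hasSum 1 fun n _ => radWeight_nonneg n

lemma hasSum_log_mul_radWeight :
    HasSum (fun n : ℕ+ => log n * radWeight s t n) (S s t * ∑' n : ℕ+, radWeight s t n) :=
  hasSum_mul_of_hasSum_primes (fun n => radWeight_nonneg n) (a := fun k : ℕ => (k : ℝ))
    (fun k => k.cast_nonneg) (fun n => hasSum_primes_factorization_mul_log n)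
    (summable_log_mul_radWeight ht hs) (zero_lt_one.trans_le (one_le_tsum_radWeight ht hs)).ne'
    fun p => hasSum_factorization_mul_radWeight ht hs p.2

lemma hasSum_log_rad_mul_radWeight :
    HasSum (fun n : ℕ+ => log (rad n) * radWeight s t n) (T s t * ∑' n : ℕ+, radWeight s t n) :=
  hasSum_mul_of_hasSum_primes (fun n => radWeight_nonneg n)
    (a := fun k : ℕ => if k = 0 then (0 : ℝ) else 1) (fun k => by positivity)
    (fun n => hasSum_primes_ite_factorization_mul_log n) (summable_log_rad_mul_radWeight ht hs)
    (zero_lt_one.trans_le (one_le_tsum_radWeight ht hs)).ne'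
    fun p => hasSum_ite_factorization_mul_radWeight ht hs p.2

end Identities

theorem stmt_9 (s t : ℝ) (ht : 0 < t) (hs : 1 + t < s) :
    Summable (fun n : {n : ℕ+ // T s t * Real.log (n : ℝ) < S s t * Real.log (rad n : ℝ)} =>
      ((rad (n : ℕ+) : ℝ) ^ t / ((n : ℕ+) : ℝ) ^ s) *
        (S s t * Real.log (rad (n : ℕ+) : ℝ) - T s t * Real.log ((n : ℕ+) : ℝ))) ∧
    Summable (fun n : {n : ℕ+ // T s t * Real.log (n : ℝ) > S s t * Real.log (rad n : ℝ)} =>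
      ((rad (n : ℕ+) : ℝ) ^ t / ((n : ℕ+) : ℝ) ^ s) *
        (T s t * Real.log ((n : ℕ+) : ℝ) - S s t * Real.log (rad (n : ℕ+) : ℝ))) ∧
    (∑' n : {n : ℕ+ // T s t * Real.log (n : ℝ) < S s t * Real.log (rad n : ℝ)},
        ((rad (n : ℕ+) : ℝ) ^ t / ((n : ℕ+) : ℝ) ^ s) *
          (S s t * Real.log (rad (n : ℕ+) : ℝ) - T s t * Real.log ((n : ℕ+) : ℝ))) =
      ∑' n : {n : ℕ+ // T s t * Real.log (n : ℝ) > S s t * Real.log (rad n : ℝ)},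
        ((rad (n : ℕ+) : ℝ) ^ t / ((n : ℕ+) : ℝ) ^ s) *
          (T s t * Real.log ((n : ℕ+) : ℝ) - S s t * Real.log (rad (n : ℕ+) : ℝ)) := by
  have hlog := hasSum_log_mul_radWeight ht.le hs
  have hrad := hasSum_log_rad_mul_radWeight ht.le hs
  have hzero := (hrad.mul_left (S s t)).sub (hlog.mul_left (T s t))
  rw [show S s t * (T s t * _) - T s t * (S s t * _) = (0 : ℝ) by ring] at hzero
  refine HasSum.tsum_subtype_lt_eq_tsum_subtype_gt (w := fun n : ℕ+ => radWeight s t n) ?_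
  exact hzero.congr_fun fun n => by ring
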